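/- arXiv:1401.7044 — 13 statements merged into one kernel-verified Lean document; each statement's English description precedes it below -/
import Mathlib

section
/- Let F be a field, let λ ∈ F be nonzero, let α : ℤ → F and β : ℤ → F be sequences of nonzero elements, and let Ω : ℤ × ℤ → F take nonzero values. Define U_{l,m} = λ^l · Ω_{l,m}. Assume (i) the (1,−2)-periodicity Ω_{l+1,m−2} = Ω_{l,m} for all l,m ∈ ℤ, and (ii) U satisfies the lattice modified KdV equation U_{l+1,m+1}/U_{l,m} = (α_l U_{l+1,m} − β_m U_{l,m+1})/(α_l U_{l,m+1} − β_m U_{l+1,m}) for all l,m (all denominators nonzero). Then for all l,m: Ω_{l,m+3}/Ω_{l,m} = (Ω_{l,m+1} − λ(α_l/β_m)Ω_{l,m+2}) / (λ·(λΩ_{l,m+2} − (α_l/β_m)Ω_{l,m+1})). -/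
/-!
Write `k = α_l / β_m`. By the periodicity, `U_{l+1,m} = λ^{l+1} Ω_{l,m+2}` and
`U_{l+1,m+1} = λ^{l+1} Ω_{l,m+3}`, so every entry of the lattice mKdV equation at `(l, m)`
lives on the single column `l`. Its right-hand side is homogeneous of degree zero, so the
common factor `λ^l` cancels, leaving `λ Ω_{l,m+3} / Ω_{l,m} = (kλΩ_{l,m+2} - Ω_{l,m+1}) /
(kΩ_{l,m+1} - λΩ_{l,m+2})`; dividing by `λ` gives the reduced equation.
-/

theorem apply_succ_eq_of_periodic {α : Type*} {Ω : ℤ → ℤ → α}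
    (hper : ∀ l m, Ω (l + 1) (m - 2) = Ω l m) (l m : ℤ) :
    Ω (l + 1) m = Ω l (m + 2) := by
  simpa using hper l (m + 2)

section MKdVQuotient

variable {F : Type*} [Field F]

theorem mkdv_quotient_mul_left {c : F} (hc : c ≠ 0) (a b x y : F) :
    (a * (c * y) - b * (c * x)) / (a * (c * x) - b * (c * y)) =
      (a * y - b * x) / (a * x - b * y) := by
  rw [show a * (c * y) - b * (c * x) = c * (a * y - b * x) by ring,
    show a * (c * x) - b * (c * y) = c * (a * x - b * y) by ring]
  exact mul_div_mul_left _ _ hc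

theorem mkdv_quotient_eq_reduced {a b lam : F} (hb : b ≠ 0) (hlam : lam ≠ 0) (x y : F) :
    (a * (lam * y) - b * x) / (a * x - b * (lam * y)) =
      lam * ((x - lam * (a / b) * y) / (lam * (lam * y - a / b * x))) := by
  obtain ⟨k, rfl⟩ : ∃ k, a = k * b := ⟨a / b, (div_mul_cancel₀ a hb).symm⟩
  rw [mul_div_cancel_right₀ k hb]
  calc (k * b * (lam * y) - b * x) / (k * b * x - b * (lam * y))
      = (k * lam * y - x) / (k * x - lam * y) := by
        rw [show k * b * (lam * y) - b * x = b * (k * lam * y - x) by ring,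
          show k * b * x - b * (lam * y) = b * (k * x - lam * y) by ring]
        exact mul_div_mul_left _ _ hb
    _ = lam * ((x - lam * k * y) / (lam * (lam * y - k * x))) := by
        rw [mul_div_assoc', mul_div_mul_left _ _ hlam, ← neg_div_neg_eq]
        ring_nf

end MKdVQuotient

theorem reduced_lattice_mkdv_general
    (F : Type*) [Field F] (lam : F) (hlam : lam ≠ 0)
    (α β : ℤ → F) (hβ : ∀ m, β m ≠ 0)
    (Ω : ℤ → ℤ → F)
    (U : ℤ → ℤ → F) (hU : ∀ l m, U l m = lam ^ l * Ω l m)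
    (hper : ∀ l m, Ω (l + 1) (m - 2) = Ω l m)
    (hmkdv : ∀ l m, U (l + 1) (m + 1) / U l m =
      (α l * U (l + 1) m - β m * U l (m + 1)) /
      (α l * U l (m + 1) - β m * U (l + 1) m)) :
    ∀ l m, Ω l (m + 3) / Ω l m =
      (Ω l (m + 1) - lam * (α l / β m) * Ω l (m + 2)) /
      (lam * (lam * Ω l (m + 2) - (α l / β m) * Ω l (m + 1))) := by
  intro l m
  have h := hmkdv l m
  rw [hU, hU, hU, hU, apply_succ_eq_of_periodic hper, apply_succ_eq_of_periodic hper,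
    show m + 1 + 2 = m + 3 by ring, zpow_add_one₀ hlam, mul_assoc, mul_assoc,
    mul_div_mul_left _ _ (zpow_ne_zero l hlam), mkdv_quotient_mul_left (zpow_ne_zero l hlam),
    mkdv_quotient_eq_reduced (hβ m) hlam] at h
  exact mul_left_cancel₀ hlam (by rwa [mul_div_assoc] at h)

/-- The `(1,-2)`-periodic reduction of the lattice modified KdV equation
(of ABS type `H3_{(0,0)}`), `U_{l,m} = λ^l Ω_{l,m}`, satisfies the reduced equation
`Ω_{l,m+3}/Ω_{l,m} = (Ω_{l,m+1} - λ(α_l/β_m)Ω_{l,m+2}) / (λ(λΩ_{l,m+2} - (α_l/β_m)Ω_{l,m+1}))`. -/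
theorem reduced_lattice_mkdv
    (F : Type*) [Field F] (lam : F) (hlam : lam ≠ 0)
    (α β : ℤ → F) (hα : ∀ l, α l ≠ 0) (hβ : ∀ m, β m ≠ 0)
    (Ω : ℤ → ℤ → F) (hΩ : ∀ l m, Ω l m ≠ 0)
    (U : ℤ → ℤ → F) (hU : ∀ l m, U l m = lam ^ l * Ω l m)
    (hper : ∀ l m, Ω (l + 1) (m - 2) = Ω l m)
    (hden : ∀ l m, α l * U l (m + 1) - β m * U (l + 1) m ≠ 0)
    (hmkdv : ∀ l m, U (l + 1) (m + 1) / U l m =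
      (α l * U (l + 1) m - β m * U l (m + 1)) /
      (α l * U l (m + 1) - β m * U (l + 1) m)) :
    ∀ l m, Ω l (m + 3) / Ω l m =
      (Ω l (m + 1) - lam * (α l / β m) * Ω l (m + 2)) /
      (lam * (lam * Ω l (m + 2) - (α l / β m) * Ω l (m + 1))) :=
  reduced_lattice_mkdv_general F lam hlam α β hβ Ω U hU hper hmkdv
end

section
/- Let F be a field, let λ, α ∈ F be nonzero, let β : ℤ → F be a sequence of nonzero elements, and let Ω : ℤ → F take nonzero values. Assume Ω satisfies, for all m ∈ ℤ, the reduced lattice modified KdV equation Ω_{m+3}/Ω_m = (Ω_{m+1} − λ(α/β_m)Ω_{m+2}) / (λ·(λΩ_{m+2} − (α/β_m)Ω_{m+1})). Define f_m = λΩ_{m+2}/Ω_{m+1}, g_m = λΩ_{m+1}/Ω_m, t_m = −α/β_m, a_m = β_m/β_{m+1}. Then for all m (all denominators nonzero): g_{m+2} = (λ²/(g_m f_m))·(1 + t_m f_m)/(t_m + f_m) and f_{m+2} = (λ²/(f_m g_{m+2}))·(1 + a_m t_m g_{m+2})/(a_m t_m + g_{m+2}); that is, (f,g) solve the q-Painlevé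 III system. -/
/-!
With `x = g_m`, `y = f_m`, `z = g_{m+2}` the left side of the reduced equation is
`Ω_{m+3}/Ω_m = xyz/λ³`, and dividing numerator and denominator of the right side by `Ω_{m+1}`
turns it into `(1 + t y)/(λ(t + y))`; solving for `z` gives the first equation. The second one is
the first at `m + 1`, since `f_m = g_{m+1}`, `g_{m+2} = f_{m+1}`, `f_{m+2} = g_{m+3}` and
`a_m t_m = t_{m+1}`.
-/

theorem reduced_mkdv_ratio_eq {F : Type*} [Field F] {lam s Ω₀ Ω₁ Ω₂ Ω₃ : F}
    (h₀ : Ω₀ ≠ 0) (h₁ : Ω₁ ≠ 0) (h₂ : Ω₂ ≠ 0) (h₃ : Ω₃ ≠ 0)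
    (hred : Ω₃ / Ω₀ = (Ω₁ - lam * s * Ω₂) / (lam * (lam * Ω₂ - s * Ω₁))) :
    lam * Ω₃ / Ω₂ = lam ^ 2 / (lam * Ω₁ / Ω₀ * (lam * Ω₂ / Ω₁)) *
      ((1 + -s * (lam * Ω₂ / Ω₁)) / (-s + lam * Ω₂ / Ω₁)) := by
  -- the left side is nonzero, so the right side is not the junk value of a division by zero
  have hden : lam * (lam * Ω₂ - s * Ω₁) ≠ 0 :=
    (div_ne_zero_iff.mp (hred ▸ div_ne_zero h₃ h₀)).2
  obtain ⟨hlam, hdiff⟩ := mul_ne_zero_iff.mp hden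
  rw [div_eq_div_iff h₀ hden] at hred
  field_simp
  rw [eq_div_iff (by rwa [neg_add_eq_sub, mul_comm Ω₁])]
  linear_combination hred

theorem reduced_mkdv_to_qPIII_general
    (F : Type*) [Field F] (lam α : F)
    (β : ℤ → F) (hβ : ∀ m, β m ≠ 0)
    (Ω : ℤ → F) (hΩ : ∀ m, Ω m ≠ 0)
    (hred : ∀ m : ℤ, Ω (m + 3) / Ω m =
      (Ω (m + 1) - lam * (α / β m) * Ω (m + 2)) /
      (lam * (lam * Ω (m + 2) - (α / β m) * Ω (m + 1))))
    (f g t a : ℤ → F)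
    (hf : ∀ m, f m = lam * Ω (m + 2) / Ω (m + 1))
    (hg : ∀ m, g m = lam * Ω (m + 1) / Ω m)
    (ht : ∀ m, t m = -α / β m)
    (ha : ∀ m, a m = β m / β (m + 1)) :
    ∀ m : ℤ,
      g (m + 2) = lam ^ 2 / (g m * f m) * ((1 + t m * f m) / (t m + f m)) ∧
      f (m + 2) = lam ^ 2 / (f m * g (m + 2)) *
        ((1 + a m * t m * g (m + 2)) / (a m * t m + g (m + 2))) := by
  have hg_succ : ∀ m, g (m + 1) = f m := fun m => by rw [hg, hf, add_assoc]; rfl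
  have hf_succ : ∀ m, f (m + 1) = g (m + 2) := fun m => by rw [← hg_succ, add_assoc]; rfl
  have hat : ∀ m, a m * t m = t (m + 1) := fun m => by
    rw [ha, ht, ht, div_mul_div_comm, mul_comm, mul_div_mul_right _ _ (hβ m)]
  have hg_step : ∀ m, g (m + 2) = lam ^ 2 / (g m * f m) * ((1 + t m * f m) / (t m + f m)) :=
    fun m => by
      rw [hg, hg, hf, ht, neg_div, add_assoc m 2 1]
      exact reduced_mkdv_ratio_eq (hΩ m) (hΩ (m + 1)) (hΩ (m + 2)) (hΩ (m + 3)) (hred m)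
  intro m
  refine ⟨hg_step m, ?_⟩
  have h := hg_step (m + 1)
  rwa [show m + 1 + 2 = m + 2 + 1 by ring, hg_succ, hg_succ, hf_succ, ← hat] at h

/-- The substitution `f = λΩ_{m+2}/Ω_{m+1}`, `g = λΩ_{m+1}/Ω_m`,
`t = -α/β_m`, `a = β_m/β_{m+1}` turns the reduced lattice modified KdV equation
into the `q`-Painlevé III system. -/
theorem reduced_mkdv_to_qPIII
    (F : Type*) [Field F] (lam α : F) (hlam : lam ≠ 0) (hα : α ≠ 0)
    (β : ℤ → F) (hβ : ∀ m, β m ≠ 0)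
    (Ω : ℤ → F) (hΩ : ∀ m, Ω m ≠ 0)
    (hΩden : ∀ m : ℤ, lam * Ω (m + 2) - (α / β m) * Ω (m + 1) ≠ 0)
    (hred : ∀ m : ℤ, Ω (m + 3) / Ω m =
      (Ω (m + 1) - lam * (α / β m) * Ω (m + 2)) /
      (lam * (lam * Ω (m + 2) - (α / β m) * Ω (m + 1))))
    (f g t a : ℤ → F)
    (hf : ∀ m, f m = lam * Ω (m + 2) / Ω (m + 1))
    (hg : ∀ m, g m = lam * Ω (m + 1) / Ω m)
    (ht : ∀ m, t m = -α / β m)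
    (ha : ∀ m, a m = β m / β (m + 1))
    (hden1 : ∀ m, t m + f m ≠ 0)
    (hden2 : ∀ m, a m * t m + g (m + 2) ≠ 0) :
    ∀ m : ℤ,
      g (m + 2) = lam ^ 2 / (g m * f m) * ((1 + t m * f m) / (t m + f m)) ∧
      f (m + 2) = lam ^ 2 / (f m * g (m + 2)) *
        ((1 + a m * t m * g (m + 2)) / (a m * t m + g (m + 2))) :=
  reduced_mkdv_to_qPIII_general F lam α β hβ Ω hΩ hred f g t a hf hg ht ha
end

section
/- Let F be a field and let a₀, a₁, a₂, f₀, f₁, f₂ be nonzero elements of F. Define the map S₀ : (a₀,a₁,a₂,f₀,f₁,f₂) ↦ (a₀^{-1}, a₀a₁, a₀a₂, f₀, f₁(a₀+f₀)/(1+a₀f₀), f₂(1+a₀f₀)/(a₀+f₀)). Then, whenever all denominators appearing are nonzero, S₀ ∘ S₀ is the identity, i.e. applying S₀ twice returns the original tuple. (This is the relation s₀² = 1 of the birational representation of the extended affine Weyl group W̃((A₂+A₁)^{(1)}) on the f-variables.) -/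
/-! `s₀` inverts `a₀` and scales `f₁`, `f₂` by `r(a₀, f₀)^{±1}`, where `r(a, f) = (a + f)/(1 + a f)`.
Since `r(a⁻¹, f) = r(a, f)⁻¹`, the second application of `s₀` undoes the first. -/

/-- The birational action of the generator `s₀` of `W̃((A₂+A₁)⁽¹⁾)` on the
tuple `(a₀, a₁, a₂, f₀, f₁, f₂)`. -/
def weylS0 {F : Type*} [Field F] :
    F × F × F × F × F × F → F × F × F × F × F × F
  | (a0, a1, a2, f0, f1, f2) =>
    (a0⁻¹, a0 * a1, a0 * a2, f0,
      f1 * (a0 + f0) / (1 + a0 * f0),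
      f2 * (1 + a0 * f0) / (a0 + f0))

section

variable {K : Type*} [Field K] {a : K}

theorem inv_add_div_one_add_inv_mul (ha : a ≠ 0) (f : K) :
    (a⁻¹ + f) / (1 + a⁻¹ * f) = (1 + a * f) / (a + f) := by
  rw [← mul_div_mul_left _ _ ha]
  field_simp

theorem one_add_inv_mul_div_inv_add (ha : a ≠ 0) (f : K) :
    (1 + a⁻¹ * f) / (a⁻¹ + f) = (a + f) / (1 + a * f) := by
  rw [← inv_div, inv_add_div_one_add_inv_mul ha, inv_div]

end

theorem weylS0_involutive_general
    (F : Type*) [Field F] (a0 a1 a2 f0 f1 f2 : F)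
    (ha0 : a0 ≠ 0)
    (hd1 : 1 + a0 * f0 ≠ 0) (hd2 : a0 + f0 ≠ 0) :
    weylS0 (weylS0 (a0, a1, a2, f0, f1, f2)) = (a0, a1, a2, f0, f1, f2) := by
  have hf1 : f1 * (a0 + f0) / (1 + a0 * f0) * (a0⁻¹ + f0) / (1 + a0⁻¹ * f0) = f1 := by
    rw [mul_div_assoc _ (a0⁻¹ + f0), inv_add_div_one_add_inv_mul ha0]
    field_simp
  have hf2 : f2 * (1 + a0 * f0) / (a0 + f0) * (1 + a0⁻¹ * f0) / (a0⁻¹ + f0) = f2 := by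
    rw [mul_div_assoc _ (1 + a0⁻¹ * f0), one_add_inv_mul_div_inv_add ha0]
    field_simp
  simp only [weylS0, inv_inv, inv_mul_cancel_left₀ ha0, hf1, hf2]

/-- the relation `s₀² = 1` of the birational representation of
`W̃((A₂+A₁)⁽¹⁾)` on the `f`-variables. -/
theorem weylS0_involutive
    (F : Type*) [Field F] (a0 a1 a2 f0 f1 f2 : F)
    (ha0 : a0 ≠ 0) (ha1 : a1 ≠ 0) (ha2 : a2 ≠ 0)
    (hf0 : f0 ≠ 0) (hf1 : f1 ≠ 0) (hf2 : f2 ≠ 0)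
    (hd1 : 1 + a0 * f0 ≠ 0) (hd2 : a0 + f0 ≠ 0)
    (hd3 : 1 + a0⁻¹ * f0 ≠ 0) (hd4 : a0⁻¹ + f0 ≠ 0) :
    weylS0 (weylS0 (a0, a1, a2, f0, f1, f2)) = (a0, a1, a2, f0, f1, f2) :=
  weylS0_involutive_general F a0 a1 a2 f0 f1 f2 ha0 hd1 hd2
end

section
/- Let F be a field and let a₀, a₁, a₂, c, f₀, f₁, f₂ be nonzero elements of F. Define the map W₀ fixing a₀,a₁,a₂, sending c ↦ c^{-1}, and sending f_i ↦ a_i a_{i+1}(a_{i-1}a_i + a_{i-1}f_i + f_{i-1}f_i)/(f_{i-1}(a_i a_{i+1} + a_i f_{i+1} + f_i f_{i+1})) for i = 0,1,2 (indices mod 3). Then, whenever all intermediate denominators are nonzero, W₀ ∘ W₀ is the identity map. (This is the relation w₀² = 1 of the birational representation of W̃((A₂+A₁)^{(1)}) on the f-variables.) -/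
/-- The birational action of the generator `w₀` of `W̃((A₂+A₁)⁽¹⁾)` on
`(a₀, a₁, a₂, c, f₀, f₁, f₂)`: it fixes the `aᵢ`, sends `c ↦ c⁻¹` and
`fᵢ ↦ aᵢa_{i+1}(a_{i-1}aᵢ + a_{i-1}fᵢ + f_{i-1}fᵢ) /
       (f_{i-1}(aᵢa_{i+1} + aᵢf_{i+1} + fᵢf_{i+1}))` (indices mod 3). -/
def weylW0 {F : Type*} [Field F] :
    F × F × F × F × F × F × F → F × F × F × F × F × F × F
  | (a0, a1, a2, c, f0, f1, f2) =>
    (a0, a1, a2, c⁻¹,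
      a0 * a1 * (a2 * a0 + a2 * f0 + f2 * f0) / (f2 * (a0 * a1 + a0 * f1 + f0 * f1)),
      a1 * a2 * (a0 * a1 + a0 * f1 + f0 * f1) / (f0 * (a1 * a2 + a1 * f2 + f1 * f2)),
      a2 * a0 * (a1 * a2 + a1 * f2 + f1 * f2) / (f1 * (a2 * a0 + a2 * f0 + f2 * f0)))

/-- Nonvanishing of the denominators appearing in `w₀`. -/
def denW0 {F : Type*} [Field F] (x : F × F × F × F × F × F × F) : Prop :=
  match x with
  | (a0, a1, a2, _, f0, f1, f2) =>
    f2 * (a0 * a1 + a0 * f1 + f0 * f1) ≠ 0 ∧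
    f0 * (a1 * a2 + a1 * f2 + f1 * f2) ≠ 0 ∧
    f1 * (a2 * a0 + a2 * f0 + f2 * f0) ≠ 0

/-! With `Nᵢ = aᵢa_{i+1} + aᵢf_{i+1} + fᵢf_{i+1}`, the image `gᵢ` of `fᵢ` under `w₀` satisfies
`aᵢa_{i+1} + aᵢg_{i+1} + gᵢg_{i+1} = aᵢa_{i+1}N_{i-1} / (fᵢf_{i-1})`, because the numerator of
the left side factors as `N_{i+1}N_{i-1}`. Substituting this into the formula for `w₀`, every
`N` cancels and `fᵢ` comes back. -/

section

variable {F : Type*} [Field F]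

/-- `weylN aᵢ a_{i+1} fᵢ f_{i+1}` is the factor `Nᵢ` of the formula for `w₀`. -/
def weylN (a b x y : F) : F := a * b + a * y + x * y

/-- The `fᵢ`-coordinate of `w₀`, in terms of `(aᵢ, a_{i+1}, a_{i-1}, fᵢ, f_{i+1}, f_{i-1})`. -/
def weylW0Coord (a b c x y z : F) : F := a * b * weylN c a z x / (z * weylN a b x y)

theorem weylW0_apply (a0 a1 a2 c f0 f1 f2 : F) :
    weylW0 (a0, a1, a2, c, f0, f1, f2) =
      (a0, a1, a2, c⁻¹, weylW0Coord a0 a1 a2 f0 f1 f2, weylW0Coord a1 a2 a0 f1 f2 f0,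
        weylW0Coord a2 a0 a1 f2 f0 f1) :=
  rfl

theorem weylN_factor (a b c x y z : F) :
    x * z * weylN b c y z + c * z * weylN a b x y + b * c * weylN c a z x =
      weylN b c y z * weylN c a z x := by
  unfold weylN
  ring

variable {a b c x y z : F}

theorem weylN_weylW0Coord (hx : x ≠ 0) (hz : z ≠ 0) (hab : weylN a b x y ≠ 0)
    (hbc : weylN b c y z ≠ 0) :
    weylN a b (weylW0Coord a b c x y z) (weylW0Coord b c a y z x) =
      a * b * weylN c a z x / (x * z) := by
  have key := weylN_factor a b c x y z
  unfold weylW0Coord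
  rw [weylN]
  field_simp
  linear_combination (a * b) * key

theorem weylW0Coord_weylW0Coord (ha : a ≠ 0) (hb : b ≠ 0) (hc : c ≠ 0) (hx : x ≠ 0)
    (hy : y ≠ 0) (hz : z ≠ 0) (hab : weylN a b x y ≠ 0) (hbc : weylN b c y z ≠ 0)
    (hca : weylN c a z x ≠ 0) :
    weylW0Coord a b c (weylW0Coord a b c x y z) (weylW0Coord b c a y z x)
      (weylW0Coord c a b z x y) = x := by
  rw [weylW0Coord, weylN_weylW0Coord hx hz hab hbc, weylN_weylW0Coord hz hy hca hab]
  unfold weylW0Coord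
  field_simp

end

theorem weylW0_involutive_general
    (F : Type*) [Field F] (a0 a1 a2 c f0 f1 f2 : F)
    (ha0 : a0 ≠ 0) (ha1 : a1 ≠ 0) (ha2 : a2 ≠ 0)
    (hf0 : f0 ≠ 0) (hf1 : f1 ≠ 0) (hf2 : f2 ≠ 0)
    (h1 : denW0 (a0, a1, a2, c, f0, f1, f2)) :
    weylW0 (weylW0 (a0, a1, a2, c, f0, f1, f2)) = (a0, a1, a2, c, f0, f1, f2) := by
  obtain ⟨h01, h12, h20⟩ := h1
  have hN0 : weylN a0 a1 f0 f1 ≠ 0 := right_ne_zero_of_mul h01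
  have hN1 : weylN a1 a2 f1 f2 ≠ 0 := right_ne_zero_of_mul h12
  have hN2 : weylN a2 a0 f2 f0 ≠ 0 := right_ne_zero_of_mul h20
  rw [weylW0_apply, weylW0_apply, inv_inv,
    weylW0Coord_weylW0Coord ha0 ha1 ha2 hf0 hf1 hf2 hN0 hN1 hN2,
    weylW0Coord_weylW0Coord ha1 ha2 ha0 hf1 hf2 hf0 hN1 hN2 hN0,
    weylW0Coord_weylW0Coord ha2 ha0 ha1 hf2 hf0 hf1 hN2 hN0 hN1]

/-- the relation `w₀² = 1` of the birational representation of
`W̃((A₂+A₁)⁽¹⁾)` on the `f`-variables. -/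
theorem weylW0_involutive
    (F : Type*) [Field F] (a0 a1 a2 c f0 f1 f2 : F)
    (ha0 : a0 ≠ 0) (ha1 : a1 ≠ 0) (ha2 : a2 ≠ 0) (hc : c ≠ 0)
    (hf0 : f0 ≠ 0) (hf1 : f1 ≠ 0) (hf2 : f2 ≠ 0)
    (h1 : denW0 (a0, a1, a2, c, f0, f1, f2))
    (h2 : denW0 (weylW0 (a0, a1, a2, c, f0, f1, f2))) :
    weylW0 (weylW0 (a0, a1, a2, c, f0, f1, f2)) = (a0, a1, a2, c, f0, f1, f2) :=
  weylW0_involutive_general F a0 a1 a2 c f0 f1 f2 ha0 ha1 ha2 hf0 hf1 hf2 h1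
end

section
/- Let F be a field and let a₀, a₁, a₂, f₀, f₁, f₂ be nonzero elements of F. For i = 0,1,2 (indices mod 3) let h_i(a; f) = a_i a_{i+1}(a_{i-1}a_i + a_{i-1}f_i + f_{i-1}f_i)/(f_{i-1}(a_i a_{i+1} + a_i f_{i+1} + f_i f_{i+1})) be the w₀-image of f_i. Then, whenever the denominators involved are nonzero: h₀(a₀,a₁,a₂; f₀^{-1},f₁^{-1},f₂^{-1}) = a₀a₁ f₁ (1 + a₂f₂(a₀f₀+1))/(1 + a₀f₀(a₁f₁+1)), h₁(a₀,a₁,a₂; f₀^{-1},f₁^{-1},f₂^{-1}) = a₁a₂ f₂ (1 + a₀f₀(a₁f₁+1))/(1 + a₁f₁(a₂f₂+1)), and h₂(a₀,a₁,a₂; f₀^{-1},f₁^{-1},f₂^{-1}) = a₂a₀ f₀ (1 + a₁f₁(a₂f₂+1))/(1 + a₂f₂(a₀f₀+1)). (This gives the closed-form action of the translation T₄ = r w₀, i.e. the q-Painlevé IV evolution, on the f-variables.) -/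
/-!
Clearing the inverted variables, each trinomial of the `w₀`-formula becomes
`x y + x v⁻¹ + u⁻¹ v⁻¹ = (1 + x u (y v + 1)) / (u v)`. Substituting this into numerator and
denominator, the `f`-factors cancel and the closed form is left.
-/

theorem add_mul_inv_add_inv_mul_inv_eq_div {F : Type*} [Field F] (x y : F) {u v : F}
    (hu : u ≠ 0) (hv : v ≠ 0) :
    x * y + x * v⁻¹ + u⁻¹ * v⁻¹ = (1 + x * u * (y * v + 1)) / (u * v) := by
  field_simp
  ring

theorem w0_image_at_inv {F : Type*} [Field F] (x y z : F) {u v w : F}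
    (hu : u ≠ 0) (hv : v ≠ 0) (hw : w ≠ 0) :
    y * z * (x * y + x * v⁻¹ + u⁻¹ * v⁻¹) / (u⁻¹ * (y * z + y * w⁻¹ + v⁻¹ * w⁻¹)) =
      y * z * w * (1 + x * u * (y * v + 1)) / (1 + y * v * (z * w + 1)) := by
  rw [add_mul_inv_add_inv_mul_inv_eq_div x y hu hv, add_mul_inv_add_inv_mul_inv_eq_div y z hv hw]
  calc _ = y * z * w * (1 + x * u * (y * v + 1)) / (1 + y * v * (z * w + 1)) *
        ((u * u⁻¹) * (v * v⁻¹)) := by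
          simp only [div_eq_mul_inv, mul_inv, inv_inv]
          ring
    _ = _ := by rw [mul_inv_cancel₀ hu, mul_inv_cancel₀ hv, mul_one, mul_one]

theorem qPIV_evolution_closed_form_general
    (F : Type*) [Field F] (a0 a1 a2 f0 f1 f2 : F)
    (hf0 : f0 ≠ 0) (hf1 : f1 ≠ 0) (hf2 : f2 ≠ 0) :
    a0 * a1 * (a2 * a0 + a2 * f0⁻¹ + f2⁻¹ * f0⁻¹) /
        (f2⁻¹ * (a0 * a1 + a0 * f1⁻¹ + f0⁻¹ * f1⁻¹)) =
      a0 * a1 * f1 * (1 + a2 * f2 * (a0 * f0 + 1)) / (1 + a0 * f0 * (a1 * f1 + 1)) ∧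
    a1 * a2 * (a0 * a1 + a0 * f1⁻¹ + f0⁻¹ * f1⁻¹) /
        (f0⁻¹ * (a1 * a2 + a1 * f2⁻¹ + f1⁻¹ * f2⁻¹)) =
      a1 * a2 * f2 * (1 + a0 * f0 * (a1 * f1 + 1)) / (1 + a1 * f1 * (a2 * f2 + 1)) ∧
    a2 * a0 * (a1 * a2 + a1 * f2⁻¹ + f1⁻¹ * f2⁻¹) /
        (f1⁻¹ * (a2 * a0 + a2 * f0⁻¹ + f2⁻¹ * f0⁻¹)) =
      a2 * a0 * f0 * (1 + a1 * f1 * (a2 * f2 + 1)) / (1 + a2 * f2 * (a0 * f0 + 1)) :=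
  ⟨w0_image_at_inv a2 a0 a1 hf2 hf0 hf1, w0_image_at_inv a0 a1 a2 hf0 hf1 hf2,
    w0_image_at_inv a1 a2 a0 hf1 hf2 hf0⟩

/-- closed-form action of the translation `T₄ = r w₀`
(the `q`-Painlevé IV evolution) on the `f`-variables: evaluating the
`w₀`-formulas `hᵢ` at the inverted `f`-variables gives the stated rational
expressions. -/
theorem qPIV_evolution_closed_form
    (F : Type*) [Field F] (a0 a1 a2 f0 f1 f2 : F)
    (ha0 : a0 ≠ 0) (ha1 : a1 ≠ 0) (ha2 : a2 ≠ 0)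
    (hf0 : f0 ≠ 0) (hf1 : f1 ≠ 0) (hf2 : f2 ≠ 0)
    (hd0 : a0 * a1 + a0 * f1⁻¹ + f0⁻¹ * f1⁻¹ ≠ 0)
    (hd1 : a1 * a2 + a1 * f2⁻¹ + f1⁻¹ * f2⁻¹ ≠ 0)
    (hd2 : a2 * a0 + a2 * f0⁻¹ + f2⁻¹ * f0⁻¹ ≠ 0)
    (he0 : 1 + a0 * f0 * (a1 * f1 + 1) ≠ 0)
    (he1 : 1 + a1 * f1 * (a2 * f2 + 1) ≠ 0)
    (he2 : 1 + a2 * f2 * (a0 * f0 + 1) ≠ 0) :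
    a0 * a1 * (a2 * a0 + a2 * f0⁻¹ + f2⁻¹ * f0⁻¹) /
        (f2⁻¹ * (a0 * a1 + a0 * f1⁻¹ + f0⁻¹ * f1⁻¹)) =
      a0 * a1 * f1 * (1 + a2 * f2 * (a0 * f0 + 1)) / (1 + a0 * f0 * (a1 * f1 + 1)) ∧
    a1 * a2 * (a0 * a1 + a0 * f1⁻¹ + f0⁻¹ * f1⁻¹) /
        (f0⁻¹ * (a1 * a2 + a1 * f2⁻¹ + f1⁻¹ * f2⁻¹)) =
      a1 * a2 * f2 * (1 + a0 * f0 * (a1 * f1 + 1)) / (1 + a1 * f1 * (a2 * f2 + 1)) ∧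
    a2 * a0 * (a1 * a2 + a1 * f2⁻¹ + f1⁻¹ * f2⁻¹) /
        (f1⁻¹ * (a2 * a0 + a2 * f0⁻¹ + f2⁻¹ * f0⁻¹)) =
      a2 * a0 * f0 * (1 + a1 * f1 * (a2 * f2 + 1)) / (1 + a2 * f2 * (a0 * f0 + 1)) :=
  qPIV_evolution_closed_form_general F a0 a1 a2 f0 f1 f2 hf0 hf1 hf2
end

section
/- Let F be a field and let q, p, c, a₀, a₂ ∈ F be nonzero with p² = q and a₂ = p. Fix N ∈ ℤ and let g, h : ℤ → F take nonzero values and satisfy, for all n ∈ ℤ (all denominators nonzero): g_{n+1} = (q^{2N+1}c²/(g_n h_n))·(1 + a₀qⁿ h_n)/(a₀qⁿ + h_n) and h_{n+1} = (q^{2N+1}c²/(h_n g_{n+1}))·(1 + a₂a₀qⁿ g_{n+1})/(a₂a₀qⁿ + g_{n+1}). Define f : ℤ → F by f_{2M-1} = g_M and f_{2M} = h_M. Then for all M ∈ ℤ: f_{M+1} = (q^{2N+1}c²/(f_{M-1} f_M))·(1 + a₀ p^M f_M)/(a₀ p^M + f_M), i.e. f solves the q-Painlevé II equation. -/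
/-! Under `a₂ = p` and `p² = q` the two qPIII steps become two consecutive steps of one
recurrence in `M`, since `a₀ p^{2n} = a₀ qⁿ` and `a₀ p^{2n+1} = a₂ a₀ qⁿ`; so the interleaved
sequence `f` satisfies that recurrence at every index. -/

theorem interleave_recurrence {α : Type*} (step : ℤ → α → α → α) (g h f : ℤ → α)
    (hg : ∀ n, g (n + 1) = step (2 * n) (g n) (h n))
    (hh : ∀ n, h (n + 1) = step (2 * n + 1) (h n) (g (n + 1)))
    (hf_odd : ∀ M, f (2 * M - 1) = g M) (hf_even : ∀ M, f (2 * M) = h M) :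
    ∀ M, f (M + 1) = step M (f (M - 1)) (f M) := by
  intro M
  obtain ⟨k, rfl | rfl⟩ := Int.even_or_odd' M
  · rw [show 2 * k + 1 = 2 * (k + 1) - 1 by ring, hf_odd, hf_odd, hf_even, hg]
  · have hf_mid : f (2 * k + 1) = g (k + 1) := by
      rw [← hf_odd]; ring_nf
    rw [show 2 * k + 1 + 1 = 2 * (k + 1) by ring, show 2 * k + 1 - 1 = 2 * k by ring,
      hf_even, hf_even, hf_mid, hh]

theorem zpow_two_mul {α : Type*} [DivisionMonoid α] (a : α) (k : ℤ) :
    a ^ (2 * k) = (a ^ 2) ^ k := by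
  rw [zpow_mul, zpow_two, sq]

theorem zpow_two_mul_add_one {G₀ : Type*} [GroupWithZero G₀] (a : G₀) (k : ℤ) :
    a ^ (2 * k + 1) = (a ^ 2) ^ k * a := by
  rw [zpow_add' (Or.inr (Or.inl (by omega))), zpow_two_mul, zpow_one]

theorem qPIII_projective_reduction_to_qPII_general
    (F : Type*) [Field F] (q p c a0 a2 : F)
    (hp2 : p ^ 2 = q) (ha2p : a2 = p) (N : ℤ)
    (g h : ℤ → F)
    (heq1 : ∀ n : ℤ, g (n + 1) =
      q ^ (2 * N + 1) * c ^ 2 / (g n * h n) *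
        ((1 + a0 * q ^ n * h n) / (a0 * q ^ n + h n)))
    (heq2 : ∀ n : ℤ, h (n + 1) =
      q ^ (2 * N + 1) * c ^ 2 / (h n * g (n + 1)) *
        ((1 + a2 * a0 * q ^ n * g (n + 1)) / (a2 * a0 * q ^ n + g (n + 1))))
    (f : ℤ → F)
    (hf1 : ∀ M : ℤ, f (2 * M - 1) = g M)
    (hf2 : ∀ M : ℤ, f (2 * M) = h M) :
    ∀ M : ℤ, f (M + 1) =
      q ^ (2 * N + 1) * c ^ 2 / (f (M - 1) * f M) *
        ((1 + a0 * p ^ M * f M) / (a0 * p ^ M + f M)) := by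
  refine interleave_recurrence
    (fun M x y => q ^ (2 * N + 1) * c ^ 2 / (x * y) * ((1 + a0 * p ^ M * y) / (a0 * p ^ M + y)))
    g h f (fun n => ?_) (fun n => ?_) hf1 hf2
  · rw [zpow_two_mul, hp2, heq1]
  · have hodd : a0 * p ^ (2 * n + 1) = a2 * a0 * q ^ n := by
      rw [zpow_two_mul_add_one, hp2, ha2p]; ring
    rw [hodd, heq2]

/-- the projective reduction (symmetrization) of the
`q`-Painlevé III system to the `q`-Painlevé II equation: interleaving the
two components `g, h` of the `q`-PIII system into `f_{2M-1} = g_M`,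
`f_{2M} = h_M`, with `a₂ = p` and `p² = q`, the sequence `f` solves
`f_{M+1} = (q^{2N+1}c²/(f_{M-1}f_M))·(1 + a₀p^M f_M)/(a₀p^M + f_M)`. -/
theorem qPIII_projective_reduction_to_qPII
    (F : Type*) [Field F] (q p c a0 a2 : F)
    (hq : q ≠ 0) (hp : p ≠ 0) (hc : c ≠ 0) (ha0 : a0 ≠ 0) (ha2 : a2 ≠ 0)
    (hp2 : p ^ 2 = q) (ha2p : a2 = p) (N : ℤ)
    (g h : ℤ → F) (hg : ∀ n, g n ≠ 0) (hh : ∀ n, h n ≠ 0)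
    (hden1 : ∀ n : ℤ, a0 * q ^ n + h n ≠ 0)
    (hden2 : ∀ n : ℤ, a2 * a0 * q ^ n + g (n + 1) ≠ 0)
    (heq1 : ∀ n : ℤ, g (n + 1) =
      q ^ (2 * N + 1) * c ^ 2 / (g n * h n) *
        ((1 + a0 * q ^ n * h n) / (a0 * q ^ n + h n)))
    (heq2 : ∀ n : ℤ, h (n + 1) =
      q ^ (2 * N + 1) * c ^ 2 / (h n * g (n + 1)) *
        ((1 + a2 * a0 * q ^ n * g (n + 1)) / (a2 * a0 * q ^ n + g (n + 1))))
    (f : ℤ → F)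
    (hf1 : ∀ M : ℤ, f (2 * M - 1) = g M)
    (hf2 : ∀ M : ℤ, f (2 * M) = h M) :
    ∀ M : ℤ, f (M + 1) =
      q ^ (2 * N + 1) * c ^ 2 / (f (M - 1) * f M) *
        ((1 + a0 * p ^ M * f M) / (a0 * p ^ M + f M)) :=
  qPIII_projective_reduction_to_qPII_general F q p c a0 a2 hp2 ha2p N g h heq1 heq2 f hf1 hf2
end

section
/- Let F be a field and let a₀, κ₀, κ₁, κ₂, λ, ω₀, ω₁, ω₂ be nonzero elements of F with κ₀κ₁κ₂ = λ. Define W = ω₀(a₀λω₁ + κ₀ω₂)/(κ₀κ₂(λω₁ + a₀κ₀ω₂)); this is the image T₁(ω₂) of ω₂ under the translation T₁ = π s₂ s₁ in the ω-representation of W̃((A₂+A₁)^{(1)}). Then, whenever the denominators involved are nonzero: ω₁/ω₂ = (a₀κ₂κ₀ W − ω₀)/(a₀κ₂κ₁ ω₀ − λκ₂ W). (This is the quad-equation of ABS type H3_{(δ,ε)=(0,0)} underlying the T₁-direction of the ω-lattice.) -/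
/-! Clearing the denominator `D = λω₁ + a₀κ₀ω₂` of `W = T₁(ω₂)`, numerator and denominator of the
right-hand side both become `(a₀² - 1) λ ω₀ / D` times `ω₁`, respectively `ω₂`
(the latter because `κ₀κ₁κ₂ = λ`); the common factor cancels. -/

section OmegaLattice

variable {F : Type*} [Field F]

/-- The image `T₁(ω₂)` of `ω₂` under the translation `T₁ = π s₂ s₁`. -/
def t1Omega2 (a0 k0 k2 lam w0 w1 w2 : F) : F :=
  w0 * (a0 * lam * w1 + k0 * w2) / (k0 * k2 * (lam * w1 + a0 * k0 * w2))

variable {a0 k0 k1 k2 lam w0 w1 w2 : F}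

theorem t1Omega2_numerator (hk0 : k0 ≠ 0) (hk2 : k2 ≠ 0) (hD : lam * w1 + a0 * k0 * w2 ≠ 0) :
    a0 * k2 * k0 * t1Omega2 a0 k0 k2 lam w0 w1 w2 - w0 =
      (a0 ^ 2 - 1) * lam * w0 * w1 / (lam * w1 + a0 * k0 * w2) := by
  unfold t1Omega2
  field_simp
  ring

theorem t1Omega2_denominator (hk0 : k0 ≠ 0) (hk2 : k2 ≠ 0) (hD : lam * w1 + a0 * k0 * w2 ≠ 0)
    (hkappa : k0 * k1 * k2 = lam) :
    a0 * k2 * k1 * w0 - lam * k2 * t1Omega2 a0 k0 k2 lam w0 w1 w2 =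
      (a0 ^ 2 - 1) * lam * w0 * w2 / (lam * w1 + a0 * k0 * w2) := by
  unfold t1Omega2
  rw [eq_div_iff hD]
  field_simp
  linear_combination w0 * a0 * (lam * w1 + a0 * k0 * w2) * hkappa

end OmegaLattice

theorem omega_lattice_H3_T1_general
    (F : Type*) [Field F] (a0 k0 k1 k2 lam w0 w1 w2 W : F)
    (hk0 : k0 ≠ 0) (hk2 : k2 ≠ 0)
    (hkappa : k0 * k1 * k2 = lam)
    (hden1 : lam * w1 + a0 * k0 * w2 ≠ 0)
    (hW : W = w0 * (a0 * lam * w1 + k0 * w2) / (k0 * k2 * (lam * w1 + a0 * k0 * w2)))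
    (hden2 : a0 * k2 * k1 * w0 - lam * k2 * W ≠ 0) :
    w1 / w2 = (a0 * k2 * k0 * W - w0) / (a0 * k2 * k1 * w0 - lam * k2 * W) := by
  change W = t1Omega2 a0 k0 k2 lam w0 w1 w2 at hW
  rw [hW, t1Omega2_denominator hk0 hk2 hden1 hkappa] at hden2 ⊢
  rw [t1Omega2_numerator hk0 hk2 hden1, div_div_div_cancel_right₀ hden1]
  have hc : (a0 ^ 2 - 1) * lam * w0 ≠ 0 := left_ne_zero_of_mul (div_ne_zero_iff.mp hden2).1
  exact (mul_div_mul_left w1 w2 hc).symm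

/-- the quad-equation of ABS type `H3_{(0,0)}` underlying the
`T₁`-direction of the `ω`-lattice of the `A₅⁽¹⁾`-surface `q`-Painlevé system:
with `W = T₁(ω₂) = ω₀(a₀λω₁ + κ₀ω₂)/(κ₀κ₂(λω₁ + a₀κ₀ω₂))`, one has
`ω₁/ω₂ = (a₀κ₂κ₀W − ω₀)/(a₀κ₂κ₁ω₀ − λκ₂W)`. -/
theorem omega_lattice_H3_T1
    (F : Type*) [Field F] (a0 k0 k1 k2 lam w0 w1 w2 W : F)
    (ha0 : a0 ≠ 0) (hk0 : k0 ≠ 0) (hk1 : k1 ≠ 0) (hk2 : k2 ≠ 0)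
    (hlam : lam ≠ 0) (hw0 : w0 ≠ 0) (hw1 : w1 ≠ 0) (hw2 : w2 ≠ 0)
    (hkappa : k0 * k1 * k2 = lam)
    (hden1 : lam * w1 + a0 * k0 * w2 ≠ 0)
    (hW : W = w0 * (a0 * lam * w1 + k0 * w2) / (k0 * k2 * (lam * w1 + a0 * k0 * w2)))
    (hden2 : a0 * k2 * k1 * w0 - lam * k2 * W ≠ 0) :
    w1 / w2 = (a0 * k2 * k0 * W - w0) / (a0 * k2 * k1 * w0 - lam * k2 * W) :=
  omega_lattice_H3_T1_general F a0 k0 k1 k2 lam w0 w1 w2 W hk0 hk2 hkappa hden1 hW hden2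
end

section
/- Let F be a field and let a₀, a₁, a₂, κ₀, κ₁, κ₂, λ, ω₀, ω₁, ω₂ be nonzero elements of F with κ₀κ₁κ₂ = λ, and set q = a₀a₁a₂. For i = 0,1,2 (indices mod 3) define V_i = κ_{i+2}ω_{i+1}ω_{i+2}/(κ_{i+1}ω_i) + a_{i+2}κ_iκ_{i+2}ω_{i+2} + κ_{i+2}ω_{i+1}/(a_{i+1}λ); this is the image T₄(ω_i) of ω_i under the translation T₄ = r w₀, obtained by substituting ω_j ↦ ω_j^{-1}, κ_j ↦ κ_j^{-1}, λ ↦ λ^{-1} into w₀(ω_i) = (a_{i+1}κ_iκ_{i+1}ω_i + a_{i+1}a_{i+2}ω_{i+1} + κ_iλω_{i+2})/(a_{i+1}κ_iκ_{i+2}ω_{i+1}ω_{i+2}). Then, whenever the denominators involved are nonzero: a₂κ₂ V₁/ω₀ − κ₂^{-1} V₀/ω₁ = (qλ² − 1)/(λa₁), and κ₁ V₀/ω₂ − (a₁κ₁)^{-1} V₂/ω₀ = a₂(qλ² − 1)/(qλ). (These are quad-equations of ABS type D4_{(1,0,0)} underlying the T₄-direction of the ω-lattice.) -/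
/-! Both relations are one rational identity in the cyclically labelled data `(i, i+1, i+2)`:
clearing denominators and using `λ = κᵢκⱼκₖ`, it reduces to a polynomial identity. The first
relation is its instance at `(0, 1, 2)`, the second is its instance at `(2, 0, 1)` divided by `a₁`. -/

/-- `T₄(ωᵢ)` in terms of the cyclically next data `j = i + 1`, `k = i + 2`. -/
def t4Image {F : Type*} [Field F] (aj ak ki kj kk lam wi wj wk : F) : F :=
  kk * wj * wk / (kj * wi) + ak * ki * kk * wk + kk * wj / (aj * lam)

theorem t4Image_quad_relation {F : Type*} [Field F] {ai aj ak ki kj kk lam wi wj wk : F}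
    (haj : aj ≠ 0) (hak : ak ≠ 0) (hki : ki ≠ 0) (hkj : kj ≠ 0) (hkk : kk ≠ 0)
    (hwi : wi ≠ 0) (hwj : wj ≠ 0) (hlam : ki * kj * kk = lam) :
    ak * kk * t4Image ak ai kj kk ki lam wj wk wi / wi
        - kk⁻¹ * t4Image aj ak ki kj kk lam wi wj wk / wj
      = (ai * aj * ak * lam ^ 2 - 1) / (lam * aj) := by
  subst hlam
  unfold t4Image
  field_simp
  ring

/-- the quad-equations of ABS type `D4_{(1,0,0)}` underlying the
`T₄`-direction of the `ω`-lattice of the `A₅⁽¹⁾`-surface `q`-Painlevé system.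
Here `Vᵢ = T₄(ωᵢ) = κ_{i+2}ω_{i+1}ω_{i+2}/(κ_{i+1}ωᵢ) + a_{i+2}κᵢκ_{i+2}ω_{i+2}
+ κ_{i+2}ω_{i+1}/(a_{i+1}λ)` (indices mod 3), and
`a₂κ₂V₁/ω₀ − κ₂⁻¹V₀/ω₁ = (qλ² − 1)/(λa₁)`,
`κ₁V₀/ω₂ − (a₁κ₁)⁻¹V₂/ω₀ = a₂(qλ² − 1)/(qλ)`. -/
theorem omega_lattice_D4_T4
    (F : Type*) [Field F] (a0 a1 a2 k0 k1 k2 lam w0 w1 w2 q V0 V1 V2 : F)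
    (ha0 : a0 ≠ 0) (ha1 : a1 ≠ 0) (ha2 : a2 ≠ 0)
    (hk0 : k0 ≠ 0) (hk1 : k1 ≠ 0) (hk2 : k2 ≠ 0) (hlam : lam ≠ 0)
    (hw0 : w0 ≠ 0) (hw1 : w1 ≠ 0) (hw2 : w2 ≠ 0)
    (hkappa : k0 * k1 * k2 = lam) (hq : q = a0 * a1 * a2)
    (hV0 : V0 = k2 * w1 * w2 / (k1 * w0) + a2 * k0 * k2 * w2 + k2 * w1 / (a1 * lam))
    (hV1 : V1 = k0 * w2 * w0 / (k2 * w1) + a0 * k1 * k0 * w0 + k0 * w2 / (a2 * lam))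
    (hV2 : V2 = k1 * w0 * w1 / (k0 * w2) + a1 * k2 * k1 * w1 + k1 * w0 / (a0 * lam)) :
    a2 * k2 * V1 / w0 - k2⁻¹ * V0 / w1 = (q * lam ^ 2 - 1) / (lam * a1) ∧
    k1 * V0 / w2 - (a1 * k1)⁻¹ * V2 / w0 = a2 * (q * lam ^ 2 - 1) / (q * lam) := by
  have hV0' : V0 = t4Image a1 a2 k0 k1 k2 lam w0 w1 w2 := hV0
  have hV1' : V1 = t4Image a2 a0 k1 k2 k0 lam w1 w2 w0 := hV1
  have hV2' : V2 = t4Image a0 a1 k2 k0 k1 lam w2 w0 w1 := hV2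
  have shifted : a1 * k1 * V0 / w2 - k1⁻¹ * V2 / w0 = (a2 * a0 * a1 * lam ^ 2 - 1) / (lam * a0) := by
    rw [hV0', hV2']
    exact t4Image_quad_relation ha0 ha1 hk2 hk0 hk1 hw2 hw0 (by rw [← hkappa]; ring)
  constructor
  · rw [hV0', hV1', hq]
    exact t4Image_quad_relation ha1 ha2 hk0 hk1 hk2 hw0 hw1 hkappa
  · calc k1 * V0 / w2 - (a1 * k1)⁻¹ * V2 / w0
        = a1⁻¹ * (a1 * k1 * V0 / w2 - k1⁻¹ * V2 / w0) := by field_simp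
      _ = a2 * (q * lam ^ 2 - 1) / (q * lam) := by
        rw [shifted, hq]
        field_simp
end

section
/- Let F be a field and let a₁, a₂, κ₀, κ₁, κ₂, λ, ω₀, ω₁, ω₂, V, W be nonzero elements of F with κ₀κ₁κ₂ = λ. Assume: (i) ω₂/ω₀ = (a₁κ₀κ₁ V − ω₁)/(a₁κ₀κ₂ ω₁ − λκ₀ V), and (ii) W = (ω₀ω₁ + a₁κ₀(λa₂ω₀ + κ₂ω₁)ω₂)/(a₁κ₀κ₁ω₀), with all denominators nonzero. Then W = ((a₁² − 1) ω₁ V + a₁a₂(a₁κ₀κ₁ V − ω₁) ω₀) / (a₁(a₁ω₁ − κ₀κ₁ V)). (Here V plays the role of T₂(ω₀) and W that of T₄(ω₀) on the ω-lattice; the conclusion is the quad-equation of ABS type H3_{(δ,ε)=(0,1)} relating the T₂- and T₄-directions, obtained by eliminating ω₂.) -/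
/-!
Substituting `λ = κ₀κ₁κ₂`, relation (i) reads `κ₀κ₂ (a₁ω₁ − κ₀κ₁V) ω₂ = ω₀ (a₁κ₀κ₁V − ω₁)`,
and the `ω₂`-term of (ii) is `a₁ (κ₀κ₁a₂ω₀ + ω₁) · κ₀κ₂ω₂`. Multiplying (ii) by `a₁ω₁ − κ₀κ₁V`
therefore eliminates `ω₂`, and what remains is the quad-equation times the common factor `κ₀κ₁ω₀`.
-/

theorem omega_lattice_H3_T2T4_of_mul_eq {R : Type*} [CommRing R]
    (a1 a2 k0 k1 k2 lam w0 w1 w2 V W : R) (hkappa : k0 * k1 * k2 = lam)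
    (h1 : w2 * (a1 * k0 * k2 * w1 - lam * k0 * V) = (a1 * k0 * k1 * V - w1) * w0)
    (h2 : W * (a1 * k0 * k1 * w0) = w0 * w1 + a1 * k0 * (lam * a2 * w0 + k2 * w1) * w2) :
    k0 * k1 * w0 * (W * (a1 * (a1 * w1 - k0 * k1 * V))) =
      k0 * k1 * w0 * ((a1 ^ 2 - 1) * w1 * V + a1 * a2 * (a1 * k0 * k1 * V - w1) * w0) := by
  subst hkappa
  linear_combination (a1 * w1 - k0 * k1 * V) * h2 + a1 * (k0 * k1 * a2 * w0 + w1) * h1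

theorem omega_lattice_H3_T2T4_general
    (F : Type*) [Field F] (a1 a2 k0 k1 k2 lam w0 w1 w2 V W : F)
    (ha1 : a1 ≠ 0)
    (hk0 : k0 ≠ 0) (hk1 : k1 ≠ 0)
    (hw0 : w0 ≠ 0)
    (hkappa : k0 * k1 * k2 = lam)
    (hden1 : a1 * k0 * k2 * w1 - lam * k0 * V ≠ 0)
    (h1 : w2 / w0 = (a1 * k0 * k1 * V - w1) / (a1 * k0 * k2 * w1 - lam * k0 * V))
    (h2 : W = (w0 * w1 + a1 * k0 * (lam * a2 * w0 + k2 * w1) * w2) / (a1 * k0 * k1 * w0))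
    (hden2 : a1 * w1 - k0 * k1 * V ≠ 0) :
    W = ((a1 ^ 2 - 1) * w1 * V + a1 * a2 * (a1 * k0 * k1 * V - w1) * w0) /
      (a1 * (a1 * w1 - k0 * k1 * V)) := by
  have h1' := (div_eq_div_iff hw0 hden1).mp h1
  have h2' := (eq_div_iff (by simp [ha1, hk0, hk1, hw0])).mp h2
  rw [eq_div_iff (mul_ne_zero ha1 hden2)]
  exact mul_left_cancel₀ (by simp [hk0, hk1, hw0])
    (omega_lattice_H3_T2T4_of_mul_eq a1 a2 k0 k1 k2 lam w0 w1 w2 V W hkappa h1' h2')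

/-- the quad-equation of ABS type `H3_{(0,1)}` relating the
`T₂`- and `T₄`-directions of the `ω`-lattice, obtained by eliminating `ω₂`.
Here `V` plays the role of `T₂(ω₀)` and `W` that of `T₄(ω₀)`. -/
theorem omega_lattice_H3_T2T4
    (F : Type*) [Field F] (a1 a2 k0 k1 k2 lam w0 w1 w2 V W : F)
    (ha1 : a1 ≠ 0) (ha2 : a2 ≠ 0)
    (hk0 : k0 ≠ 0) (hk1 : k1 ≠ 0) (hk2 : k2 ≠ 0) (hlam : lam ≠ 0)
    (hw0 : w0 ≠ 0) (hw1 : w1 ≠ 0) (hw2 : w2 ≠ 0) (hV : V ≠ 0) (hW : W ≠ 0)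
    (hkappa : k0 * k1 * k2 = lam)
    (hden1 : a1 * k0 * k2 * w1 - lam * k0 * V ≠ 0)
    (h1 : w2 / w0 = (a1 * k0 * k1 * V - w1) / (a1 * k0 * k2 * w1 - lam * k0 * V))
    (h2 : W = (w0 * w1 + a1 * k0 * (lam * a2 * w0 + k2 * w1) * w2) / (a1 * k0 * k1 * w0))
    (hden2 : a1 * w1 - k0 * k1 * V ≠ 0) :
    W = ((a1 ^ 2 - 1) * w1 * V + a1 * a2 * (a1 * k0 * k1 * V - w1) * w0) /
      (a1 * (a1 * w1 - k0 * k1 * V)) :=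
  omega_lattice_H3_T2T4_general F a1 a2 k0 k1 k2 lam w0 w1 w2 V W ha1 hk0 hk1 hw0 hkappa hden1 h1 h2
    hden2
end

section
/- Let F be a field, let p, q, λ ∈ F be nonzero with p² = q, let α : ℤ → F and β : ℤ → F be sequences of nonzero elements with α_{l+1} = q²α_l and β_{m+2} = q^{-2}β_m for all l,m, and let ζ : ℤ × ℤ → F take nonzero values with the (1,−2)-periodicity ζ_{l+1,m−2} = ζ_{l,m}. Define U_{l,m} = p^{-m}λ^{-m}ζ_{l,m}, and assume U satisfies the discrete Schwarzian KdV equation (U_{l,m} − U_{l+1,m})(U_{l,m+1} − U_{l+1,m+1}) / ((U_{l,m} − U_{l,m+1})(U_{l+1,m} − U_{l+1,m+1})) = α_l/β_m for all l,m (denominators nonzero). Then for all l,m: (ζ_{l,m} − ζ_{l,m+2})(ζ_{l,m+1} − ζ_{l,m+3}) / ((pλ ζ_{l,m} − ζ_{l,m+1})(pλ ζ_{l,m+2} − ζ_{l,m+3})) = α_l/(pλ β_m). -/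
/-! Along the reduction the four corners of an elementary square of the lattice are
`U_{l,m} = a ζ_{l,m}`, `U_{l,m+1} = (a/c) ζ_{l,m+1}`, `U_{l+1,m} = a ζ_{l,m+2}` and
`U_{l+1,m+1} = (a/c) ζ_{l,m+3}` with `a = (pλ)^{-m}` and `c = pλ`, by the periodicity of `ζ`.
Substituted into the cross-ratio, the common factor `a` cancels and exactly one factor `c`
survives, which turns the lattice equation into the reduced one. -/

theorem cross_ratio_rescale {K : Type*} [Field K] {a c : K} (ha : a ≠ 0) (hc : c ≠ 0)
    (x₀ x₁ x₂ x₃ : K) :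
    (a * x₀ - a * x₂) * (a / c * x₁ - a / c * x₃) /
        ((a * x₀ - a / c * x₁) * (a * x₂ - a / c * x₃)) =
      c * ((x₀ - x₂) * (x₁ - x₃) / ((c * x₀ - x₁) * (c * x₂ - x₃))) := by
  have hnum : (a * x₀ - a * x₂) * (a / c * x₁ - a / c * x₃) =
      a ^ 2 / c * ((x₀ - x₂) * (x₁ - x₃)) := by ring
  have hden : (a * x₀ - a / c * x₁) * (a * x₂ - a / c * x₃) =
      (a / c) ^ 2 * ((c * x₀ - x₁) * (c * x₂ - x₃)) := by field_simp
  have hfactor : a ^ 2 / c / (a / c) ^ 2 = c := by field_simp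
  rw [hnum, hden, mul_div_mul_comm, hfactor]

theorem shift_of_periodic {α : Type*} {f : ℤ → ℤ → α} (hf : ∀ l m, f (l + 1) (m - 2) = f l m)
    (l m : ℤ) : f (l + 1) m = f l (m + 2) := by
  simpa using hf l (m + 2)

theorem zpow_neg_add_one_eq_div {K : Type*} [Field K] {c : K} (hc : c ≠ 0) (m : ℤ) :
    c ^ (-(m + 1)) = c ^ (-m) / c := by
  rw [neg_add, zpow_add₀ hc, zpow_neg_one, div_eq_mul_inv]

theorem reduced_discrete_schwarzian_kdv_general
    (F : Type*) [Field F] (p lam : F)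
    (hp : p ≠ 0) (hlam : lam ≠ 0)
    (α β : ℤ → F)
    (ζ : ℤ → ℤ → F)
    (hper : ∀ l m, ζ (l + 1) (m - 2) = ζ l m)
    (U : ℤ → ℤ → F)
    (hU : ∀ l m : ℤ, U l m = p ^ (-m) * lam ^ (-m) * ζ l m)
    (hdskdv : ∀ l m,
      (U l m - U (l + 1) m) * (U l (m + 1) - U (l + 1) (m + 1)) /
        ((U l m - U l (m + 1)) * (U (l + 1) m - U (l + 1) (m + 1))) = α l / β m) :
    ∀ l m,
      (ζ l m - ζ l (m + 2)) * (ζ l (m + 1) - ζ l (m + 3)) /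
        ((p * lam * ζ l m - ζ l (m + 1)) * (p * lam * ζ l (m + 2) - ζ l (m + 3))) =
      α l / (p * lam * β m) := by
  intro l m
  have hc : p * lam ≠ 0 := mul_ne_zero hp hlam
  have hU' : ∀ l n, U l n = (p * lam) ^ (-n) * ζ l n := fun l n => by rw [hU, mul_zpow]
  have h := hdskdv l m
  rw [hU', hU', hU', hU', shift_of_periodic hper, shift_of_periodic hper,
    zpow_neg_add_one_eq_div hc, cross_ratio_rescale (zpow_ne_zero _ hc) hc] at h
  rw [show m + 3 = m + 1 + 2 by ring, mul_comm (p * lam) (β m), ← div_div (α l), ← h,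
    mul_div_cancel_left₀ _ hc]

/-- the `(1,−2)`-periodic reduction of the discrete Schwarzian
KdV equation (ABS type `Q1_{ε=0}`, the cross-ratio equation), with
`U_{l,m} = p^{-m}λ^{-m}ζ_{l,m}` (`p² = q`), parameter conditions
`α_{l+1} = q²α_l`, `β_{m+2} = q^{-2}β_m`, and periodicity
`ζ_{l+1,m−2} = ζ_{l,m}`, yields
`(ζ_{l,m} − ζ_{l,m+2})(ζ_{l,m+1} − ζ_{l,m+3}) /
 ((pλζ_{l,m} − ζ_{l,m+1})(pλζ_{l,m+2} − ζ_{l,m+3})) = α_l/(pλβ_m)`. -/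
theorem reduced_discrete_schwarzian_kdv
    (F : Type*) [Field F] (p q lam : F)
    (hp : p ≠ 0) (hq : q ≠ 0) (hlam : lam ≠ 0) (hpq : p ^ 2 = q)
    (α β : ℤ → F) (hα : ∀ l, α l ≠ 0) (hβ : ∀ m, β m ≠ 0)
    (hαper : ∀ l : ℤ, α (l + 1) = q ^ 2 * α l)
    (hβper : ∀ m : ℤ, β (m + 2) = q ^ (-2 : ℤ) * β m)
    (ζ : ℤ → ℤ → F) (hζ : ∀ l m, ζ l m ≠ 0)
    (hper : ∀ l m, ζ (l + 1) (m - 2) = ζ l m)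
    (U : ℤ → ℤ → F)
    (hU : ∀ l m : ℤ, U l m = p ^ (-m) * lam ^ (-m) * ζ l m)
    (hden : ∀ l m, (U l m - U l (m + 1)) * (U (l + 1) m - U (l + 1) (m + 1)) ≠ 0)
    (hdskdv : ∀ l m,
      (U l m - U (l + 1) m) * (U l (m + 1) - U (l + 1) (m + 1)) /
        ((U l m - U l (m + 1)) * (U (l + 1) m - U (l + 1) (m + 1))) = α l / β m) :
    ∀ l m,
      (ζ l m - ζ l (m + 2)) * (ζ l (m + 1) - ζ l (m + 3)) /
        ((p * lam * ζ l m - ζ l (m + 1)) * (p * lam * ζ l (m + 2) - ζ l (m + 3))) =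
      α l / (p * lam * β m) :=
  reduced_discrete_schwarzian_kdv_general F p lam hp hlam α β ζ hper U hU hdskdv
end

section
/- Let F be a field, let a₀, a₁, b ∈ F be nonzero with q = a₀a₁, and let g, h : ℤ → F take nonzero values and satisfy, for all l ∈ ℤ (all denominators nonzero, and 1 + g_l ≠ 0): h_{l+1} = a₀(g_l + 1)/(q^l b g_l h_l) and g_{l+1} = (h_{l+1} + 1)/(q^l b h_{l+1} g_l). Then for all l ∈ ℤ: (g_{l+1} g_l − 1/(q^l b))·(g_{l-1} g_l − 1/(q^{l-1} b)) = (q^{-l} a₁ / b)·g_l/(1 + g_l). (That is, the coupled first-order q-Painlevé II system on the A₆^{(1)}-surface f-lattice is equivalent to the single second-order q-Painlevé II equation.) -/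
/-!
By the second equation of the system, each factor on the left of q-PII is a reciprocal,
`g_{m+1} g_m - 1/(q^m b) = 1/(q^m b h_{m+1})`. The product of the factors for `m = l` and
`m = l - 1` therefore only involves `h_{l+1} h_l`, which the first equation expresses through
`g_l` alone.
-/

theorem add_one_div_mul_sub_one_div {F : Type*} [Field F] {x y : F} (hx : x ≠ 0) (hy : y ≠ 0)
    (c : F) : (y + 1) / (c * y * x) * x - 1 / c = 1 / (c * y) := by
  field_simp
  ring

theorem A6_coupled_system_to_qPII_general
    (F : Type*) [Field F] (a0 a1 b q : F)
    (ha0 : a0 ≠ 0) (ha1 : a1 ≠ 0) (hq : q = a0 * a1)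
    (g h : ℤ → F) (hg : ∀ l, g l ≠ 0) (hh : ∀ l, h l ≠ 0)
    (heq1 : ∀ l : ℤ, h (l + 1) = a0 * (g l + 1) / (q ^ l * b * g l * h l))
    (heq2 : ∀ l : ℤ, g (l + 1) = (h (l + 1) + 1) / (q ^ l * b * h (l + 1) * g l)) :
    ∀ l : ℤ,
      (g (l + 1) * g l - 1 / (q ^ l * b)) * (g (l - 1) * g l - 1 / (q ^ (l - 1) * b)) =
        q ^ (-l) * a1 / b * (g l / (1 + g l)) := by
  have factor (m : ℤ) : g (m + 1) * g m - 1 / (q ^ m * b) = 1 / (q ^ m * b * h (m + 1)) := by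
    rw [heq2 m, add_one_div_mul_sub_one_div (hg m) (hh _)]
  intro l
  have factor_prev := factor (l - 1)
  rw [sub_add_cancel] at factor_prev
  have hq0 : q ≠ 0 := hq ▸ mul_ne_zero ha0 ha1
  have hgl := hg l
  have hhl := hh l
  rw [factor l, mul_comm (g (l - 1)), factor_prev, heq1 l, zpow_sub_one₀ hq0, zpow_neg]
  field_simp
  rw [hq]
  ring

/-- the coupled first-order `q`-Painlevé II system on the
`A₆⁽¹⁾`-surface `f`-lattice is equivalent to the single second-order
`q`-Painlevé II equation. -/
theorem A6_coupled_system_to_qPII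
    (F : Type*) [Field F] (a0 a1 b q : F)
    (ha0 : a0 ≠ 0) (ha1 : a1 ≠ 0) (hb : b ≠ 0) (hq : q = a0 * a1)
    (g h : ℤ → F) (hg : ∀ l, g l ≠ 0) (hh : ∀ l, h l ≠ 0)
    (hg1 : ∀ l : ℤ, 1 + g l ≠ 0)
    (heq1 : ∀ l : ℤ, h (l + 1) = a0 * (g l + 1) / (q ^ l * b * g l * h l))
    (heq2 : ∀ l : ℤ, g (l + 1) = (h (l + 1) + 1) / (q ^ l * b * h (l + 1) * g l)) :
    ∀ l : ℤ,
      (g (l + 1) * g l - 1 / (q ^ l * b)) * (g (l - 1) * g l - 1 / (q ^ (l - 1) * b)) =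
        q ^ (-l) * a1 / b * (g l / (1 + g l)) :=
  A6_coupled_system_to_qPII_general F a0 a1 b q ha0 ha1 hq g h hg hh heq1 heq2
end

section
/- Let F be a field, let p, q, b ∈ F be nonzero with p² = q, and set a₀ = p. Let g, h : ℤ → F take nonzero values and satisfy, for all m ∈ ℤ (all denominators nonzero): h_{m+1} = a₀(g_m + 1)/(q^m b g_m h_m) and g_{m+1} = (h_{m+1} + 1)/(q^m b h_{m+1} g_m). Define f : ℤ → F by f_{2m} = g_m and f_{2m+1} = h_{m+1}. Then for all l ∈ ℤ: f_{l+1} f_{l-1} = (f_l + 1)/(p^{l-1} b f_l), i.e. f solves the q-discrete Painlevé I equation. -/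
/-!
After substituting `q = p²`, each equation of the coupled system, multiplied through by the
last factor of its denominator (`h_m`, resp. `g_m`), is the `q`-PI equation at an even, resp. odd,
index of the interleaved sequence. In the first equation the factor `a₀ = p` turns
`q^m = p^{2m}` into `p^{2m-1}`, which is why a half-translation becomes a translation.
-/

theorem mul_eq_div_of_eq_div_mul {G₀ : Type*} [CommGroupWithZero G₀] {x y c d : G₀}
    (hy : y ≠ 0) (hx : x = c / (d * y)) : x * y = c / d := by
  rw [hx, div_mul_eq_mul_div, mul_div_mul_right _ _ hy]

section

variable {F : Type*} [Field F] {p b : F} {g h : ℤ → F}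

theorem sq_zpow_eq_zpow_two_mul (p : F) (m : ℤ) : (p ^ 2) ^ m = p ^ (2 * m) := by
  rw [← zpow_natCast, ← zpow_mul, Nat.cast_ofNat]

theorem h_succ_mul_h (hp : p ≠ 0) (hh : ∀ m, h m ≠ 0)
    (heq1 : ∀ m : ℤ, h (m + 1) = p * (g m + 1) / ((p ^ 2) ^ m * b * g m * h m)) (m : ℤ) :
    h (m + 1) * h m = (g m + 1) / (p ^ (2 * m - 1) * b * g m) := by
  have hpow : (p ^ 2) ^ m = p ^ (2 * m - 1) * p := by
    rw [sq_zpow_eq_zpow_two_mul, ← zpow_add_one₀ hp, sub_add_cancel]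
  rw [mul_eq_div_of_eq_div_mul (hh m) (heq1 m), hpow,
    show p ^ (2 * m - 1) * p * b * g m = p ^ (2 * m - 1) * b * g m * p by ring,
    mul_comm p, mul_div_mul_right _ _ hp]

theorem g_succ_mul_g (hg : ∀ m, g m ≠ 0)
    (heq2 : ∀ m : ℤ, g (m + 1) = (h (m + 1) + 1) / ((p ^ 2) ^ m * b * h (m + 1) * g m))
    (m : ℤ) :
    g (m + 1) * g m = (h (m + 1) + 1) / (p ^ (2 * m) * b * h (m + 1)) := by
  rw [mul_eq_div_of_eq_div_mul (hg m) (heq2 m), sq_zpow_eq_zpow_two_mul]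

end

theorem A6_projective_reduction_to_qPI_general
    (F : Type*) [Field F] (p q b : F)
    (hp : p ≠ 0) (hpq : p ^ 2 = q)
    (g h : ℤ → F) (hg : ∀ m, g m ≠ 0) (hh : ∀ m, h m ≠ 0)
    (heq1 : ∀ m : ℤ, h (m + 1) = p * (g m + 1) / (q ^ m * b * g m * h m))
    (heq2 : ∀ m : ℤ, g (m + 1) = (h (m + 1) + 1) / (q ^ m * b * h (m + 1) * g m))
    (f : ℤ → F)
    (hf1 : ∀ m : ℤ, f (2 * m) = g m)
    (hf2 : ∀ m : ℤ, f (2 * m + 1) = h (m + 1)) :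
    ∀ l : ℤ, f (l + 1) * f (l - 1) = (f l + 1) / (p ^ (l - 1) * b * f l) := by
  subst hpq
  intro l
  obtain ⟨m, rfl | rfl⟩ := l.even_or_odd'
  · have hprev : f (2 * m - 1) = h m := by
      simpa only [show 2 * (m - 1) + 1 = 2 * m - 1 by ring, sub_add_cancel] using hf2 (m - 1)
    rw [hf2, hprev, hf1, h_succ_mul_h hp hh heq1]
  · have hnext : f (2 * m + 1 + 1) = g (m + 1) := by
      simpa only [show 2 * (m + 1) = 2 * m + 1 + 1 by ring] using hf1 (m + 1)
    rw [hnext, add_sub_cancel_right, hf1, hf2, g_succ_mul_g hg heq2]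

/-- the projective reduction of the coupled `q`-Painlevé II
system on the `A₆⁽¹⁾`-surface `f`-lattice to the `q`-discrete Painlevé I
equation: with `a₀ = p`, `p² = q`, and the interleaved sequence
`f_{2m} = g_m`, `f_{2m+1} = h_{m+1}`, one has
`f_{l+1}f_{l-1} = (f_l + 1)/(p^{l-1} b f_l)`. -/
theorem A6_projective_reduction_to_qPI
    (F : Type*) [Field F] (p q b : F)
    (hp : p ≠ 0) (hq : q ≠ 0) (hb : b ≠ 0) (hpq : p ^ 2 = q)
    (g h : ℤ → F) (hg : ∀ m, g m ≠ 0) (hh : ∀ m, h m ≠ 0)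
    (heq1 : ∀ m : ℤ, h (m + 1) = p * (g m + 1) / (q ^ m * b * g m * h m))
    (heq2 : ∀ m : ℤ, g (m + 1) = (h (m + 1) + 1) / (q ^ m * b * h (m + 1) * g m))
    (f : ℤ → F)
    (hf1 : ∀ m : ℤ, f (2 * m) = g m)
    (hf2 : ∀ m : ℤ, f (2 * m + 1) = h (m + 1)) :
    ∀ l : ℤ, f (l + 1) * f (l - 1) = (f l + 1) / (p ^ (l - 1) * b * f l) :=
  A6_projective_reduction_to_qPI_general F p q b hp hpq g h hg hh heq1 heq2 f hf1 hf2
end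

section
/- Let F be a field, let q ∈ F be nonzero, let α : ℤ → F and β : ℤ → F be sequences of nonzero elements with α_{l+1} = qα_l for all l, and let U : ℤ × ℤ → F take nonzero values with the (1,−2)-periodicity U_{l+1,m−2} = U_{l,m}. Assume U satisfies, for all l,m, the H1_{ε=0}-type quad-equation (U_{l,m} − α_lβ_m U_{l,m+1})(U_{l+1,m} − α_{l+1}β_m U_{l+1,m+1}) = U_{l,m} U_{l,m+1}. Then for all l,m: (U_{l,m} − α_lβ_m U_{l,m+1})(U_{l,m+2} − qα_lβ_m U_{l,m+3}) = U_{l,m} U_{l,m+1}. (That is, the restricted H1-type equation on the projectively reduced ω-lattice of the A₆^{(1)}-surface system is the (1,−2)-periodic reduction of an H1_{ε=0}-type quad-equation.) -/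
lemma shift_eq_of_periodic {X : Type*} {U : ℤ → ℤ → X}
    (hper : ∀ l m, U (l + 1) (m - 2) = U l m) (l m : ℤ) :
    U (l + 1) m = U l (m + 2) := by
  simpa using hper l (m + 2)

theorem reduced_H1_equation_general
    (F : Type*) [Field F] (q : F)
    (α β : ℤ → F)
    (hαper : ∀ l : ℤ, α (l + 1) = q * α l)
    (U : ℤ → ℤ → F)
    (hper : ∀ l m, U (l + 1) (m - 2) = U l m)
    (heq : ∀ l m, (U l m - α l * β m * U l (m + 1)) *
      (U (l + 1) m - α (l + 1) * β m * U (l + 1) (m + 1)) = U l m * U l (m + 1)) :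
    ∀ l m, (U l m - α l * β m * U l (m + 1)) *
      (U l (m + 2) - q * α l * β m * U l (m + 3)) = U l m * U l (m + 1) := by
  intro l m
  have h := heq l m
  rwa [shift_eq_of_periodic hper l m, shift_eq_of_periodic hper l (m + 1), hαper,
    add_assoc m 1 2] at h

/-- the restricted `H1`-type equation on the projectively
reduced `ω`-lattice of the `A₆⁽¹⁾`-surface system is the `(1,−2)`-periodic
reduction of the `H1_{ε=0}`-type quad-equation
`(U_{l,m} − α_lβ_mU_{l,m+1})(U_{l+1,m} − α_{l+1}β_mU_{l+1,m+1}) = U_{l,m}U_{l,m+1}`. -/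
theorem reduced_H1_equation
    (F : Type*) [Field F] (q : F) (hq : q ≠ 0)
    (α β : ℤ → F) (hα : ∀ l, α l ≠ 0) (hβ : ∀ m, β m ≠ 0)
    (hαper : ∀ l : ℤ, α (l + 1) = q * α l)
    (U : ℤ → ℤ → F) (hU : ∀ l m, U l m ≠ 0)
    (hper : ∀ l m, U (l + 1) (m - 2) = U l m)
    (heq : ∀ l m, (U l m - α l * β m * U l (m + 1)) *
      (U (l + 1) m - α (l + 1) * β m * U (l + 1) (m + 1)) = U l m * U l (m + 1)) :
    ∀ l m, (U l m - α l * β m * U l (m + 1)) *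
      (U l (m + 2) - q * α l * β m * U l (m + 3)) = U l m * U l (m + 1) :=
  reduced_H1_equation_general F q α β hαper U hper heq
end
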